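/- For every continuously differentiable function f : ℝ → ℝ, the zero-bias identity ∫_ℝ f′(x) y_N(x) dx = (1/(N−1)) Σ_{n=1}^N x_{N,n} f(x_{N,n}) holds; equivalently, writing σ² = (N−1)/N for the variance of the empirical distribution 𝕡_N = (1/N) Σ_{n=1}^N δ_{x_{N,n}}, one has σ² ∫_ℝ f′(x) y_N(x) dx = (1/N) Σ_{n=1}^N x_{N,n} f(x_{N,n}), so y_N is the density of the 𝕡_N-zero-bias distribution. -/

import Mathlib

/-!
On `[x_{n+1}, x_n)` the density is the constant `S_n / (N - 1)`, so the fundamental theorem of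
calculus on each piece gives `∫ f' y_N = ∑_{n<N} S_n (f(x_n) - f(x_{n+1})) / (N - 1)`.
Summation by parts turns this into `(∑_{n<N} x_n f(x_n) - S_{N-1} f(x_N)) / (N - 1)`, and the
zero mean gives `S_{N-1} = -x_N`.
-/

open Finset

/-- Partial sum `S_n = x_1 + ... + x_n`. -/
noncomputable def S (x : ℕ → ℝ) (n : ℕ) : ℝ := ∑ i ∈ Finset.Icc 1 n, x i

/-- `x_1, ..., x_N` is a solution of the recursion `x_{n+1} = x_n - 1/S_n`
with all relevant partial sums nonzero. -/
def IsSolution (N : ℕ) (x : ℕ → ℝ) : Prop :=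
  ∀ n, 1 ≤ n → n ≤ N - 1 → S x n ≠ 0 ∧ x (n + 1) = x n - 1 / S x n

/-- Zero-median property: the middle value is `0` when `N` is odd, and the two middle
values are negatives of each other when `N` is even. -/
def ZeroMedian (N : ℕ) (x : ℕ → ℝ) : Prop :=
  (Odd N → x ((N + 1) / 2) = 0) ∧ (Even N → x (N / 2) = - x (N / 2 + 1))

/-- The piecewise-constant density `y_N`: it equals `S_{N,n}/(N-1)`
(equivalently `1/((N-1)(x_{N,n} - x_{N,n+1}))`) on `[x_{N,n+1}, x_{N,n})` for
`n = 1, ..., N-1`, and `0` outside `[x_{N,N}, x_{N,1})`. -/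
noncomputable def yDen (N : ℕ) (x : ℕ → ℝ) (t : ℝ) : ℝ :=
  ∑ n ∈ Finset.Icc 1 (N - 1), if x (n + 1) ≤ t ∧ t < x n then S x n / ((N : ℝ) - 1) else 0

open MeasureTheory

lemma S_succ (x : ℕ → ℝ) (n : ℕ) : S x (n + 1) = S x n + x (n + 1) :=
  sum_Icc_succ_top (by omega) x

lemma sum_S_mul_sub_succ (x b : ℕ → ℝ) (m : ℕ) :
    ∑ n ∈ Icc 1 m, S x n * (b n - b (n + 1)) =
      ∑ n ∈ Icc 1 m, x n * b n - S x m * b (m + 1) := by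
  induction m with
  | zero => simp [S]
  | succ m ih =>
    rw [sum_Icc_succ_top (by omega), sum_Icc_succ_top (by omega), ih, S_succ]
    ring

lemma mul_ite_mem_Ico_eq_indicator {α : Type*} [LinearOrder α] (g : α → ℝ) (a b : α) (c : ℝ)
    (t : α) :
    g t * (if a ≤ t ∧ t < b then c else 0) = (Set.Ico a b).indicator (fun s => g s * c) t := by
  by_cases h : a ≤ t ∧ t < b
  · rw [if_pos h, Set.indicator_of_mem (Set.mem_Ico.2 h)]
  · rw [if_neg h, Set.indicator_of_notMem (fun hm => h (Set.mem_Ico.1 hm)), mul_zero]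

section Integral

variable {f : ℝ → ℝ}

lemma integrable_indicator_Ico_deriv_mul (hf : ContDiff ℝ 1 f) (a b c : ℝ) :
    Integrable ((Set.Ico a b).indicator (fun s => deriv f s * c)) :=
  (((hf.continuous_deriv le_rfl).mul continuous_const).integrableOn_Icc.mono_set
    Set.Ico_subset_Icc_self).integrable_indicator measurableSet_Ico

lemma integral_indicator_Ico_deriv_mul (hf : ContDiff ℝ 1 f) {a b : ℝ} (hab : a ≤ b) (c : ℝ) :
    ∫ t, (Set.Ico a b).indicator (fun s => deriv f s * c) t = (f b - f a) * c := by
  rw [integral_indicator measurableSet_Ico, ← integral_Icc_eq_integral_Ico,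
    integral_Icc_eq_integral_Ioc, ← intervalIntegral.integral_of_le hab,
    intervalIntegral.integral_mul_const,
    intervalIntegral.integral_deriv_eq_sub (fun y _ => (hf.differentiable one_ne_zero) y)
      ((hf.continuous_deriv le_rfl).intervalIntegrable _ _)]

lemma integral_deriv_mul_yDen (hf : ContDiff ℝ 1 f) (N : ℕ) {x : ℕ → ℝ}
    (hanti : ∀ n, 1 ≤ n → n < N → x (n + 1) ≤ x n) :
    ∫ t, deriv f t * yDen N x t =
      ∑ n ∈ Icc 1 (N - 1), (f (x n) - f (x (n + 1))) * (S x n / ((N : ℝ) - 1)) := by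
  simp only [yDen, mul_sum, mul_ite_mem_Ico_eq_indicator]
  rw [integral_finsetSum _ fun n _ => integrable_indicator_Ico_deriv_mul hf _ _ _]
  refine sum_congr rfl fun n hn => ?_
  obtain ⟨hn1, hnN⟩ := mem_Icc.1 hn
  exact integral_indicator_Ico_deriv_mul hf (hanti n hn1 (by omega)) _

lemma integral_deriv_mul_yDen_of_sum_eq_zero (hf : ContDiff ℝ 1 f) {N : ℕ} (hN : 1 ≤ N)
    {x : ℕ → ℝ} (hanti : ∀ n, 1 ≤ n → n < N → x (n + 1) ≤ x n)
    (hmean : ∑ i ∈ Icc 1 N, x i = 0) :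
    ∫ t, deriv f t * yDen N x t = (1 / ((N : ℝ) - 1)) * ∑ n ∈ Icc 1 N, x n * f (x n) := by
  obtain ⟨M, rfl⟩ : ∃ M, N = M + 1 := ⟨N - 1, by omega⟩
  have hSM : S x M = -x (M + 1) := by
    linarith [S_succ x M, show S x (M + 1) = 0 from hmean]
  have habel := sum_S_mul_sub_succ x (fun n => f (x n)) M
  rw [hSM] at habel
  rw [integral_deriv_mul_yDen hf _ hanti, Nat.add_sub_cancel, sum_Icc_succ_top (by omega)]
  calc ∑ n ∈ Icc 1 M, (f (x n) - f (x (n + 1))) * (S x n / ((↑(M + 1) : ℝ) - 1))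
      = (∑ n ∈ Icc 1 M, S x n * (f (x n) - f (x (n + 1)))) / ((↑(M + 1) : ℝ) - 1) := by
        rw [sum_div]
        exact sum_congr rfl fun n _ => by ring
    _ = _ := by rw [habel]; ring

end Integral

theorem yDen_zero_bias_identity_general (N : ℕ) (hN : 3 ≤ N) (x : ℕ → ℝ)
    (hdec : ∀ n, 1 ≤ n → n < N → x (n + 1) < x n)
    (hmean : ∑ i ∈ Finset.Icc 1 N, x i = 0)
    (f : ℝ → ℝ) (hf : ContDiff ℝ 1 f) :
    (∫ t, deriv f t * yDen N x t) =
        (1 / ((N : ℝ) - 1)) * ∑ n ∈ Finset.Icc 1 N, x n * f (x n) ∧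
      (((N : ℝ) - 1) / N) * (∫ t, deriv f t * yDen N x t) =
        (1 / (N : ℝ)) * ∑ n ∈ Finset.Icc 1 N, x n * f (x n) := by
  have hidentity := integral_deriv_mul_yDen_of_sum_eq_zero hf (by omega)
    (fun n h1 h2 => (hdec n h1 h2).le) hmean
  have hN1 : (N : ℝ) - 1 ≠ 0 := by
    have : (3 : ℝ) ≤ N := by exact_mod_cast hN
    linarith
  refine ⟨hidentity, ?_⟩
  rw [hidentity]
  field_simp

/-- The zero-bias identity: for every continuously differentiable `f : ℝ → ℝ`,
`∫ f'(t) y_N(t) dt = (1/(N-1)) ∑_{n=1}^N x_{N,n} f(x_{N,n})`; equivalently, with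
`σ² = (N-1)/N` the variance of the empirical distribution `𝕡_N`,
`σ² ∫ f'(t) y_N(t) dt = (1/N) ∑_{n=1}^N x_{N,n} f(x_{N,n})`, i.e. `y_N` is the density of
the `𝕡_N`-zero-bias distribution. -/
theorem yDen_zero_bias_identity (N : ℕ) (hN : 3 ≤ N) (x : ℕ → ℝ)
    (hsol : IsSolution N x) (hdec : ∀ n, 1 ≤ n → n < N → x (n + 1) < x n)
    (hmean : ∑ i ∈ Finset.Icc 1 N, x i = 0)
    (f : ℝ → ℝ) (hf : ContDiff ℝ 1 f) :
    (∫ t, deriv f t * yDen N x t) =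
        (1 / ((N : ℝ) - 1)) * ∑ n ∈ Finset.Icc 1 N, x n * f (x n) ∧
      (((N : ℝ) - 1) / N) * (∫ t, deriv f t * yDen N x t) =
        (1 / (N : ℝ)) * ∑ n ∈ Finset.Icc 1 N, x n * f (x n) :=
  yDen_zero_bias_identity_general N hN x hdec hmean f hf
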